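/- arXiv:1601.02010 — 4 statements merged into one kernel-verified Lean document; each statement's English description precedes it below -/
import Mathlib

section
/- For every j ≥ 1, the infinite series Σ_{l=j}^∞ C(l,j)/4^l converges and equals 1/2^j, where C(l,j) are the Catalan triangle numbers. -/
/-!
The recurrence determines the triangle, and it is solved by the ballot numbers
`C(l, j) = binom(2l-j-1, l-1) - binom(2l-j-1, l)`; in particular `C(n+1, 1)` is the Catalan number
`c_n`. Writing `b_n = binom(2n, n) / 4^n`, one has `c_n / 4^n = 2 (b_n - b_{n+1})` and
`b_n^2 ≤ 1 / (2n+1)`, so `∑ c_n / 4^n = 2 b_0 = 2` and the first column sums to `1/2`.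
Read along a column, the recurrence says `C(l, j+2) = C(l, j+1) - C(l-1, j)`, hence the column sums
satisfy `S_{j+2} = S_{j+1} - S_j / 4`; with `S_1 = 1/2` and `S_2 = 1/4` this gives `S_j = 2^{-j}`.
-/

open Filter Topology

lemma hasSum_sub_succ_of_antitone {f : ℕ → ℝ} {l : ℝ} (hf : Antitone f)
    (hl : Tendsto f atTop (𝓝 l)) : HasSum (fun n ↦ f n - f (n + 1)) (f 0 - l) := by
  rw [hasSum_iff_tendsto_nat_of_nonneg fun n ↦ sub_nonneg.2 (hf n.le_succ)]
  simpa only [Finset.sum_range_sub'] using tendsto_const_nhds.sub hl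

lemma hasSum_pred_div_pow {K : Type*} [Field K] [TopologicalSpace K] [IsTopologicalRing K]
    {f : ℕ → K} {s : K} (c : K) (hf : f 0 = 0) (h : HasSum (fun n ↦ f n / c ^ n) s) :
    HasSum (fun n ↦ f (n - 1) / c ^ n) (s / c) := by
  rw [← hasSum_nat_add_iff' 1]
  simpa [hf, pow_succ, div_div] using h.div_const c

namespace Nat

lemma centralBinom_succ_div_four_pow (n : ℕ) :
    ((n + 1).centralBinom : ℝ) / 4 ^ (n + 1) =
      n.centralBinom / 4 ^ n * ((2 * n + 1) / (2 * n + 2)) := by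
  have h : ((n : ℝ) + 1) * (n + 1).centralBinom = 2 * (2 * n + 1) * n.centralBinom := by
    exact_mod_cast succ_mul_centralBinom_succ n
  rw [pow_succ]
  field_simp
  linear_combination 2 * h

lemma sq_centralBinom_div_four_pow_le (n : ℕ) :
    ((n.centralBinom : ℝ) / 4 ^ n) ^ 2 ≤ 1 / (2 * n + 1) := by
  induction n with
  | zero => simp
  | succ n ih =>
    rw [centralBinom_succ_div_four_pow, mul_pow]
    calc ((n.centralBinom : ℝ) / 4 ^ n) ^ 2 * ((2 * n + 1) / (2 * n + 2)) ^ 2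
        ≤ 1 / (2 * n + 1) * ((2 * n + 1) / (2 * n + 2)) ^ 2 := by gcongr
      _ ≤ 1 / (2 * ((n + 1 : ℕ) : ℝ) + 1) := by
        push_cast
        field_simp
        nlinarith

lemma antitone_centralBinom_div_four_pow :
    Antitone fun n : ℕ ↦ (n.centralBinom : ℝ) / 4 ^ n := by
  refine antitone_nat_of_succ_le fun n ↦ ?_
  rw [centralBinom_succ_div_four_pow]
  refine mul_le_of_le_one_right (by positivity) ?_
  rw [div_le_one (by positivity)]
  linarith

lemma tendsto_centralBinom_div_four_pow :
    Tendsto (fun n : ℕ ↦ (n.centralBinom : ℝ) / 4 ^ n) atTop (𝓝 0) := by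
  have hsq : Tendsto (fun n : ℕ ↦ ((n.centralBinom : ℝ) / 4 ^ n) ^ 2) atTop (𝓝 0) := by
    refine squeeze_zero (fun n ↦ by positivity) (fun n ↦ ?_)
      tendsto_one_div_add_atTop_nhds_zero_nat
    refine (sq_centralBinom_div_four_pow_le n).trans ?_
    gcongr
    linarith
  have hnonneg (n : ℕ) : 0 ≤ (n.centralBinom : ℝ) / 4 ^ n := by positivity
  simpa [Real.sqrt_sq (hnonneg _)] using hsq.sqrt

end Nat

lemma catalan_div_four_pow_eq_two_mul_sub (n : ℕ) :
    (catalan n : ℝ) / 4 ^ n =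
      2 * ((n.centralBinom : ℝ) / 4 ^ n - (n + 1).centralBinom / 4 ^ (n + 1)) := by
  have h : ((n : ℝ) + 1) * catalan n = n.centralBinom := by
    exact_mod_cast succ_mul_catalan_eq_centralBinom n
  rw [Nat.centralBinom_succ_div_four_pow, ← h]
  field_simp
  ring

lemma hasSum_catalan_div_four_pow : HasSum (fun n ↦ (catalan n : ℝ) / 4 ^ n) 2 := by
  have h := (hasSum_sub_succ_of_antitone Nat.antitone_centralBinom_div_four_pow
    Nat.tendsto_centralBinom_div_four_pow).mul_left 2
  simpa [← catalan_div_four_pow_eq_two_mul_sub] using h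

/-- `ballot a k` is `C(a + k + 1, k + 1)`, indexed so that no truncated subtraction occurs. -/
def ballot (a k : ℕ) : ℤ := (k + 2 * a).choose (k + a) - (k + 2 * a).choose (k + a + 1)

lemma ballot_zero_left (k : ℕ) : ballot 0 k = 1 := by
  simp [ballot]

lemma ballot_succ_zero (a : ℕ) : ballot (a + 1) 0 = ballot a 1 := by
  have p₁ := Nat.choose_succ_succ' (2 * a + 1) a
  have p₂ := Nat.choose_succ_succ' (2 * a + 1) (a + 1)
  have hsymm := Nat.choose_symm_half a
  simp only [ballot]
  ring_nf at p₁ p₂ hsymm ⊢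
  omega

lemma ballot_succ_succ (a k : ℕ) :
    ballot (a + 1) (k + 1) = ballot (a + 1) k + ballot a (k + 2) := by
  have p₁ := Nat.choose_succ_succ' (k + 2 * a + 2) (k + a + 1)
  have p₂ := Nat.choose_succ_succ' (k + 2 * a + 2) (k + a + 2)
  simp only [ballot]
  ring_nf at p₁ p₂ ⊢
  omega

lemma ballot_zero_right (a : ℕ) : ballot a 0 = catalan a := by
  have hchoose : ((2 * a).choose (a + 1) : ℤ) * (a + 1) = (2 * a).choose a * a := by
    have h := Nat.choose_succ_right_eq (2 * a) a
    rw [show 2 * a - a = a by omega] at h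
    exact_mod_cast h
  have hcatalan : ((a : ℤ) + 1) * catalan a = (2 * a).choose a := by
    rw [← Nat.centralBinom_eq_two_mul_choose]
    exact_mod_cast succ_mul_catalan_eq_centralBinom a
  refine mul_left_cancel₀ (by positivity : (a : ℤ) + 1 ≠ 0) ?_
  simp only [ballot, zero_add]
  linear_combination hcatalan.symm - hchoose

structure IsCatalanTriangle {R : Type*} [Zero R] [One R] [Add R] (C : ℕ → ℕ → R) :
    Prop where
  one_one : C 1 1 = 1
  col_zero : ∀ i, C i 0 = 0
  eq_zero_of_lt : ∀ i j, i < j → C i j = 0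
  eq_add : ∀ i j, 1 ≤ j → j ≤ i → (i, j) ≠ (1, 1) →
    C i j = C (i - 1) (j - 1) + C i (j + 1)

namespace IsCatalanTriangle

section

variable {R : Type*} [AddGroupWithOne R] {C : ℕ → ℕ → R}

lemma succ_succ (hC : IsCatalanTriangle C) {i j : ℕ} (hji : j ≤ i) (hne : (i, j) ≠ (0, 0)) :
    C (i + 1) (j + 1) = C i j + C (i + 1) (j + 2) :=
  hC.eq_add (i + 1) (j + 1) (by omega) (by omega) (by simpa using hne)

lemma eq_ballot (hC : IsCatalanTriangle C) (a k : ℕ) : C (a + k + 1) (k + 1) = ballot a k := by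
  induction a generalizing k with
  | zero =>
    induction k with
    | zero => simpa [ballot_zero_left] using hC.one_one
    | succ k ih =>
      simp only [zero_add, ballot_zero_left] at ih ⊢
      rw [hC.succ_succ (i := k + 1) (j := k + 1) le_rfl (by simp), ih,
        hC.eq_zero_of_lt _ _ (by omega), add_zero]
  | succ a iha =>
    induction k with
    | zero =>
      simp only [add_zero, zero_add]
      rw [hC.succ_succ (i := a + 1) (j := 0) (by omega) (by simp), hC.col_zero, zero_add,
        ballot_succ_zero]
      exact iha 1
    | succ k ih =>
      rw [hC.succ_succ (i := a + 1 + (k + 1)) (j := k + 1) (by omega) (by simp),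
        ballot_succ_succ, Int.cast_add, ← ih, ← iha (k + 2)]
      ring_nf

lemma succ_one (hC : IsCatalanTriangle C) (n : ℕ) : C (n + 1) 1 = catalan n := by
  simpa [ballot_zero_right] using hC.eq_ballot n 0

end

variable {C : ℕ → ℕ → ℝ}

lemma hasSum_col_one (hC : IsCatalanTriangle C) : HasSum (fun l ↦ C l 1 / 4 ^ l) (1 / 2) := by
  have h := hasSum_catalan_div_four_pow.div_const 4
  rw [← hasSum_nat_add_iff' 1]
  norm_num [hC.succ_one, hC.eq_zero_of_lt 0 1, pow_succ, ← div_div] at h ⊢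
  exact h

lemma col_two (hC : IsCatalanTriangle C) (l : ℕ) : C l 2 = C l 1 - if l = 1 then 1 else 0 := by
  match l with
  | 0 => simp [hC.eq_zero_of_lt]
  | 1 => simp [hC.eq_zero_of_lt, hC.one_one]
  | n + 2 => simp [hC.succ_succ (i := n + 1) (j := 0) (by omega) (by simp), hC.col_zero]

lemma hasSum_col_two (hC : IsCatalanTriangle C) : HasSum (fun l ↦ C l 2 / 4 ^ l) (1 / 4) := by
  have h := hC.hasSum_col_one.sub (hasSum_ite_eq 1 (1 / 4 : ℝ))
  rw [show (1 / 2 - 1 / 4 : ℝ) = 1 / 4 by norm_num] at h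
  refine h.congr_fun fun l ↦ ?_
  rw [hC.col_two, sub_div]
  split_ifs <;> simp_all

lemma col_add_two (hC : IsCatalanTriangle C) {j : ℕ} (hj : 1 ≤ j) (l : ℕ) :
    C l (j + 2) = C l (j + 1) - C (l - 1) j := by
  rcases Nat.lt_or_ge j l with hjl | hlj
  · obtain ⟨i, rfl⟩ : ∃ i, l = i + 1 := ⟨l - 1, by omega⟩
    have hne : (i, j) ≠ (0, 0) := by simp only [ne_eq, Prod.mk.injEq]; omega
    rw [hC.succ_succ (by omega) hne, Nat.add_sub_cancel]
    ring
  · rw [hC.eq_zero_of_lt l (j + 2) (by omega), hC.eq_zero_of_lt l (j + 1) (by omega),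
      hC.eq_zero_of_lt (l - 1) j (by omega), sub_zero]

lemma hasSum_col_add_two (hC : IsCatalanTriangle C) {j : ℕ} (hj : 1 ≤ j) {s t : ℝ}
    (hs : HasSum (fun l ↦ C l j / 4 ^ l) s) (ht : HasSum (fun l ↦ C l (j + 1) / 4 ^ l) t) :
    HasSum (fun l ↦ C l (j + 2) / 4 ^ l) (t - s / 4) := by
  have hshift := hasSum_pred_div_pow (f := fun l ↦ C l j) 4 (hC.eq_zero_of_lt 0 j hj) hs
  simpa only [hC.col_add_two hj, sub_div] using ht.sub hshift

end IsCatalanTriangle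

/-- For every j ≥ 1, Σ_{l=j}^∞ C(l,j)/4^l = 1/2^j (the terms with l < j vanish
since C(l,j) = 0 for j > l). -/
theorem catalan_triangle_column_series (C : ℕ → ℕ → ℝ)
    (h11 : C 1 1 = 1)
    (h0 : ∀ i, C i 0 = 0)
    (hgt : ∀ i j, i < j → C i j = 0)
    (hrec : ∀ i j, 1 ≤ j → j ≤ i → (i, j) ≠ (1, 1) →
      C i j = C (i - 1) (j - 1) + C i (j + 1)) :
    ∀ j : ℕ, 1 ≤ j → HasSum (fun l : ℕ => C l j / 4 ^ l) ((1 : ℝ) / 2 ^ j) := by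
  have hC : IsCatalanTriangle C := ⟨h11, h0, hgt, hrec⟩
  suffices h : ∀ j, 1 ≤ j → HasSum (fun l ↦ C l j / 4 ^ l) (1 / 2 ^ j) ∧
      HasSum (fun l ↦ C l (j + 1) / 4 ^ l) (1 / 2 ^ (j + 1)) from fun j hj ↦ (h j hj).1
  intro j hj
  induction j, hj using Nat.le_induction with
  | base => exact ⟨by simpa using hC.hasSum_col_one, by norm_num [hC.hasSum_col_two]⟩
  | succ j hj ih =>
    refine ⟨ih.2, ?_⟩
    convert hC.hasSum_col_add_two hj ih.1 ih.2 using 1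
    ring
end

section
/- For 0 < σ < η and integers n ≥ 0, k ≥ 0, the function g(η,σ) = ησ/(η²-σ²)² · (η-σ)(log((η+σ)/(η-σ)))^k is integrable on the region {(η,σ) : β ≤ η ≤ α, 0 ≤ σ ≤ β} for any 0 ≤ β < α, despite the singularity at σ = η. -/
open MeasureTheory

/-- Bound for powers of logarithms: `(log x)^k ≤ (2k+2)^k * x^(1/2)` for `x ≥ 1`. -/
lemma aux_log_pow_le (k : ℕ) {x : ℝ} (hx : 1 ≤ x) :
    Real.log x ^ k ≤ (2 * (k : ℝ) + 2) ^ k * x ^ ((1 : ℝ) / 2) := by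
  have hx0 : (0 : ℝ) < x := one_pos.trans_le hx
  have hm : (0 : ℝ) < 2 * (k : ℝ) + 2 := by positivity
  have h1 : Real.log x ≤ (2 * (k : ℝ) + 2) * x ^ (1 / (2 * (k : ℝ) + 2)) := by
    have h2 : Real.log (x ^ (1 / (2 * (k : ℝ) + 2))) ≤ x ^ (1 / (2 * (k : ℝ) + 2)) - 1 :=
      Real.log_le_sub_one_of_pos (by positivity)
    rw [Real.log_rpow hx0] at h2
    have h3 : 1 / (2 * (k : ℝ) + 2) * Real.log x ≤ x ^ (1 / (2 * (k : ℝ) + 2)) := by linarith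
    calc Real.log x = (2 * (k : ℝ) + 2) * (1 / (2 * (k : ℝ) + 2) * Real.log x) := by
          field_simp
      _ ≤ (2 * (k : ℝ) + 2) * (x ^ (1 / (2 * (k : ℝ) + 2))) :=
          mul_le_mul_of_nonneg_left h3 hm.le
  have hL0 : 0 ≤ Real.log x := Real.log_nonneg hx
  calc Real.log x ^ k ≤ ((2 * (k : ℝ) + 2) * x ^ (1 / (2 * (k : ℝ) + 2))) ^ k :=
        pow_le_pow_left₀ hL0 h1 k
    _ = (2 * (k : ℝ) + 2) ^ k * (x ^ (1 / (2 * (k : ℝ) + 2))) ^ k := mul_pow _ _ _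
    _ = (2 * (k : ℝ) + 2) ^ k * x ^ ((k : ℝ) / (2 * (k : ℝ) + 2)) := by
        rw [← Real.rpow_natCast (x ^ (1 / (2 * (k : ℝ) + 2))) k, ← Real.rpow_mul hx0.le]
        congr 1
        ring
    _ ≤ (2 * (k : ℝ) + 2) ^ k * x ^ ((1 : ℝ) / 2) := by
        apply mul_le_mul_of_nonneg_left _ (by positivity)
        apply Real.rpow_le_rpow_of_exponent_le hx
        rw [div_le_div_iff₀ hm (by norm_num)]
        have : (0:ℝ) ≤ (k:ℝ) := Nat.cast_nonneg k
        linarith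

/-- Corner estimate `(u+v)^(-3/2) ≤ u^(-3/4) * v^(-3/4)`. -/
lemma aux_corner {u v : ℝ} (hu : 0 < u) (hv : 0 < v) :
    (u + v) ^ (-(3 : ℝ) / 2) ≤ u ^ (-(3 : ℝ) / 4) * v ^ (-(3 : ℝ) / 4) := by
  rw [← Real.mul_rpow hu.le hv.le]
  have h1 : (u + v) ^ (-(3 : ℝ) / 2) = ((u + v) ^ (2 : ℕ)) ^ (-(3 : ℝ) / 4) := by
    rw [← Real.rpow_natCast (u + v) 2, ← Real.rpow_mul (by positivity)]
    norm_num
  rw [h1]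
  exact Real.rpow_le_rpow_of_nonpos (by positivity) (by nlinarith) (by norm_num)

lemma aux_int1 {a b : ℝ} (hab : a ≤ b) :
    IntegrableOn (fun x : ℝ => (x - a) ^ (-(3 : ℝ) / 4)) (Set.Icc a b) volume := by
  have h : IntervalIntegrable (fun x : ℝ => x ^ (-(3 : ℝ) / 4)) volume 0 (b - a) :=
    intervalIntegral.intervalIntegrable_rpow' (by norm_num)
  have h2 := h.comp_sub_right a
  rw [zero_add, sub_add_cancel] at h2
  have h3 := (intervalIntegrable_iff_integrableOn_Ioc_of_le hab).mp h2
  exact h3.congr_set_ae Ioc_ae_eq_Icc.symm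

lemma aux_int2 {b : ℝ} (hb : 0 ≤ b) :
    IntegrableOn (fun x : ℝ => (b - x) ^ (-(3 : ℝ) / 4)) (Set.Icc 0 b) volume := by
  have h : IntervalIntegrable (fun x : ℝ => x ^ (-(3 : ℝ) / 4)) volume 0 b :=
    intervalIntegral.intervalIntegrable_rpow' (by norm_num)
  have h2 := (h.comp_sub_left b).symm
  rw [sub_zero, sub_self] at h2
  have h3 := (intervalIntegrable_iff_integrableOn_Ioc_of_le hb).mp h2
  exact h3.congr_set_ae Ioc_ae_eq_Icc.symm

/-- The pointwise bound for the singular kernel. -/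
lemma aux_pointwise (k : ℕ) {α β η σ : ℝ} (hβ : 0 < β) (hη : β < η) (hηα : η ≤ α)
    (hσ0 : 0 ≤ σ) (hσ : σ < β) :
    ‖η * σ * (η - σ) * Real.log ((η + σ) / (η - σ)) ^ k / ((η ^ 2 - σ ^ 2) ^ 2)‖ ≤
      (α / β) * ((2 * (k : ℝ) + 2) ^ k * (2 * α) ^ ((1 : ℝ) / 2)) *
        ((η - β) ^ (-(3 : ℝ) / 4) * (β - σ) ^ (-(3 : ℝ) / 4)) := by
  have hα : 0 < α := hβ.trans (hη.trans_le hηα)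
  have ht : 0 < η - σ := by linarith
  have hs : 0 < η + σ := by linarith
  have hη0 : 0 < η := hβ.trans hη
  have hx1 : 1 ≤ (η + σ) / (η - σ) := by
    rw [le_div_iff₀ ht]; linarith
  have hL0 : 0 ≤ Real.log ((η + σ) / (η - σ)) := Real.log_nonneg hx1
  have heq : η * σ * (η - σ) * Real.log ((η + σ) / (η - σ)) ^ k / ((η ^ 2 - σ ^ 2) ^ 2)
      = (η * σ / (η + σ) ^ 2) * (Real.log ((η + σ) / (η - σ)) ^ k / (η - σ)) := by
    rw [show η ^ 2 - σ ^ 2 = (η - σ) * (η + σ) by ring]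
    field_simp
  rw [heq, Real.norm_eq_abs, abs_of_nonneg (by positivity)]
  have hA : η * σ / (η + σ) ^ 2 ≤ α / β := by
    rw [div_le_div_iff₀ (by positivity) hβ]
    nlinarith
  have hB : Real.log ((η + σ) / (η - σ)) ^ k / (η - σ)
      ≤ (2 * (k : ℝ) + 2) ^ k * (2 * α) ^ ((1 : ℝ) / 2) *
        ((η - β) ^ (-(3 : ℝ) / 4) * (β - σ) ^ (-(3 : ℝ) / 4)) := by
    have h1 : Real.log ((η + σ) / (η - σ)) ^ k
        ≤ (2 * (k : ℝ) + 2) ^ k * ((η + σ) / (η - σ)) ^ ((1 : ℝ) / 2) :=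
      aux_log_pow_le k hx1
    have h2 : ((η + σ) / (η - σ)) ^ ((1 : ℝ) / 2)
        ≤ (2 * α) ^ ((1 : ℝ) / 2) * ((η - σ) ^ ((1 : ℝ) / 2))⁻¹ := by
      have hle : (η + σ) / (η - σ) ≤ (2 * α) / (η - σ) := by
        gcongr
        linarith
      calc ((η + σ) / (η - σ)) ^ ((1 : ℝ) / 2)
          ≤ ((2 * α) / (η - σ)) ^ ((1 : ℝ) / 2) :=
            Real.rpow_le_rpow (by positivity) hle (by norm_num)
        _ = (2 * α) ^ ((1 : ℝ) / 2) * ((η - σ) ^ ((1 : ℝ) / 2))⁻¹ := by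
            rw [Real.div_rpow (by positivity) ht.le, div_eq_mul_inv]
    have h12 : Real.log ((η + σ) / (η - σ)) ^ k
        ≤ (2 * (k : ℝ) + 2) ^ k * ((2 * α) ^ ((1 : ℝ) / 2) * ((η - σ) ^ ((1 : ℝ) / 2))⁻¹) :=
      h1.trans (mul_le_mul_of_nonneg_left h2 (by positivity))
    have hpow : (η - σ) ^ (-(3 : ℝ) / 2) = ((η - σ) ^ ((1 : ℝ) / 2))⁻¹ * (η - σ)⁻¹ := by
      have hexp : (-(3 : ℝ) / 2) = -((1 : ℝ) / 2) + (-1 : ℝ) := by norm_num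
      rw [hexp, Real.rpow_add ht, Real.rpow_neg ht.le, Real.rpow_neg_one]
    have hcor : (η - σ) ^ (-(3 : ℝ) / 2)
        ≤ (η - β) ^ (-(3 : ℝ) / 4) * (β - σ) ^ (-(3 : ℝ) / 4) := by
      rw [show η - σ = (η - β) + (β - σ) by ring]
      exact aux_corner (by linarith) (by linarith)
    calc Real.log ((η + σ) / (η - σ)) ^ k / (η - σ)
        ≤ (2 * (k : ℝ) + 2) ^ k * ((2 * α) ^ ((1 : ℝ) / 2) * ((η - σ) ^ ((1 : ℝ) / 2))⁻¹)
            / (η - σ) := by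
          apply div_le_div_of_nonneg_right h12 ht.le
      _ = (2 * (k : ℝ) + 2) ^ k * (2 * α) ^ ((1 : ℝ) / 2) * ((η - σ) ^ (-(3 : ℝ) / 2)) := by
          rw [hpow]; ring
      _ ≤ (2 * (k : ℝ) + 2) ^ k * (2 * α) ^ ((1 : ℝ) / 2) *
            ((η - β) ^ (-(3 : ℝ) / 4) * (β - σ) ^ (-(3 : ℝ) / 4)) :=
          mul_le_mul_of_nonneg_left hcor (by positivity)
  calc η * σ / (η + σ) ^ 2 * (Real.log ((η + σ) / (η - σ)) ^ k / (η - σ))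
      ≤ (α / β) * ((2 * (k : ℝ) + 2) ^ k * (2 * α) ^ ((1 : ℝ) / 2) *
          ((η - β) ^ (-(3 : ℝ) / 4) * (β - σ) ^ (-(3 : ℝ) / 4))) := by
        apply mul_le_mul hA hB (by positivity) (by positivity)
    _ = (α / β) * ((2 * (k : ℝ) + 2) ^ k * (2 * α) ^ ((1 : ℝ) / 2)) *
          ((η - β) ^ (-(3 : ℝ) / 4) * (β - σ) ^ (-(3 : ℝ) / 4)) := by ring

/-- For 0 ≤ β < α and k ∈ ℕ, the function
(η,σ) ↦ ησ(η-σ)(log((η+σ)/(η-σ)))^k/(η²-σ²)² is (Lebesgue) integrable on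
[β,α] × [0,β], despite the singularity at the corner σ = β = η. -/
theorem singular_kernel_integrable (k : ℕ) (α β : ℝ) (hβ : 0 ≤ β) (hβα : β < α) :
    IntegrableOn
      (fun p : ℝ × ℝ =>
        p.1 * p.2 * (p.1 - p.2) * Real.log ((p.1 + p.2) / (p.1 - p.2)) ^ k /
          ((p.1 ^ 2 - p.2 ^ 2) ^ 2))
      (Set.Icc β α ×ˢ Set.Icc 0 β) volume := by
  rcases eq_or_lt_of_le hβ with h0 | h0
  · have hz : volume (Set.Icc β α ×ˢ Set.Icc 0 β) = 0 := by
      rw [Measure.volume_eq_prod, Measure.prod_prod, ← h0]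
      simp [Real.volume_Icc]
    rw [IntegrableOn, Measure.restrict_eq_zero.mpr hz]
    exact integrable_zero_measure
  have hα : 0 < α := h0.trans hβα
  apply Integrable.mono'
    (g := fun p : ℝ × ℝ => (α / β) * ((2 * (k : ℝ) + 2) ^ k * (2 * α) ^ ((1 : ℝ) / 2)) *
      ((p.1 - β) ^ (-(3 : ℝ) / 4) * (β - p.2) ^ (-(3 : ℝ) / 4)))
  · rw [Measure.volume_eq_prod, ← Measure.prod_restrict]
    exact ((aux_int1 hβα.le).mul_prod (aux_int2 hβ)).const_mul _
  · apply Measurable.aestronglyMeasurable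
    apply Measurable.div
    · exact (((measurable_fst.mul measurable_snd).mul (measurable_fst.sub measurable_snd)).mul
        ((Real.measurable_log.comp ((measurable_fst.add measurable_snd).div
          (measurable_fst.sub measurable_snd))).pow_const k))
    · exact ((measurable_fst.pow_const 2).sub (measurable_snd.pow_const 2)).pow_const 2
  · have hsm : MeasurableSet (Set.Icc β α ×ˢ Set.Icc 0 β) :=
      measurableSet_Icc.prod measurableSet_Icc
    have h1 : (volume : Measure (ℝ × ℝ)) {p : ℝ × ℝ | p.1 = β} = 0 := by
      have he : {p : ℝ × ℝ | p.1 = β} = ({β} : Set ℝ) ×ˢ (Set.univ : Set ℝ) := by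
        ext p; simp [Prod.ext_iff, eq_comm]
      rw [he, Measure.volume_eq_prod, Measure.prod_prod]
      simp
    have h2 : (volume : Measure (ℝ × ℝ)) {p : ℝ × ℝ | p.2 = β} = 0 := by
      have he : {p : ℝ × ℝ | p.2 = β} = (Set.univ : Set ℝ) ×ˢ ({β} : Set ℝ) := by
        ext p; simp [Prod.ext_iff, eq_comm]
      rw [he, Measure.volume_eq_prod, Measure.prod_prod]
      simp
    have e1 : ∀ᵐ p : ℝ × ℝ ∂volume, p.1 ≠ β := by
      rw [ae_iff]; simpa using h1
    have e2 : ∀ᵐ p : ℝ × ℝ ∂volume, p.2 ≠ β := by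
      rw [ae_iff]; simpa using h2
    filter_upwards [ae_restrict_mem hsm, ae_restrict_of_ae e1, ae_restrict_of_ae e2]
      with p hp hp1 hp2
    obtain ⟨⟨hβη, hηα⟩, hσ0, hσβ⟩ := hp
    exact aux_pointwise k h0 (lt_of_le_of_ne hβη (Ne.symm hp1)) hηα hσ0
      (lt_of_le_of_ne hσβ hp2)
end

section
/- Let λ̄ > 0 and define G_0(α,β) as any measurable function on T' = {0 ≤ β ≤ α ≤ 2R, β ≤ 2R-α} with |G_0(α,β)| ≤ λ̄(α-β), and recursively G_k(α,β) = ∫_β^α ∫_0^β [μ(η,σ) + ησ/(η²-σ²)²] G_{k-1}(η,σ) dσ dη where |μ| ≤ λ̄. Then |G_1(α,β)| ≤ F_{1,0}(α,β) + F_{0,1}(α,β)/4, where F_{n,k}(α,β) = λ̄^{n+1}α^n β^n (α-β)(log((α+β)/(α-β)))^k/(n!(n+1)!k!). -/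
open intervalIntegral

/-- F_{n,k}(α,β) = λ̄^{n+1}α^nβ^n(α-β)(log((α+β)/(α-β)))^k/(n!(n+1)!k!). -/
noncomputable def Fnk (lam : ℝ) (n k : ℕ) (α β : ℝ) : ℝ :=
  lam ^ (n + 1) * α ^ n * β ^ n * (α - β) * Real.log ((α + β) / (α - β)) ^ k /
    ((Nat.factorial n : ℝ) * (Nat.factorial (n + 1) : ℝ) * (Nat.factorial k : ℝ))

/-!
Since |μ + ησ/(η²-σ²)²| ≤ λ̄ + ησ/(η²-σ²)² and |G₀| ≤ F_{0,0}, the integrand of G₁ is dominated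
by (λ̄ + ησ/(η²-σ²)²) F_{0,0}, whose double integral is
H₁[F_{0,0}] + H₂[F_{0,0}] = F_{1,0} + F_{0,1}/4. The first identity is a polynomial integral.
For the second, the inner integral has the antiderivative
λ̄((log(η+σ) - log(η-σ))/4 + η/(2(η+σ))) in σ, and the resulting function of η has the
antiderivative (λ̄/4)(η-β)(log(η+β) - log(η-β)), which vanishes at η = β.
-/

open Real Set
open MeasureTheory (volume)

theorem norm_integral_integral_le {E : Type*} [NormedAddCommGroup E] [NormedSpace ℝ E]
    {f : ℝ → ℝ → E} {g : ℝ → ℝ → ℝ} {a b c d : ℝ} (hab : a ≤ b) (hcd : c ≤ d)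
    (hfg : ∀ x ∈ Ioc a b, ∀ y ∈ Ioc c d, ‖f x y‖ ≤ g x y)
    (hg : ∀ x ∈ Ioc a b, IntervalIntegrable (g x) volume c d)
    (hg' : IntervalIntegrable (fun x => ∫ y in c..d, g x y) volume a b) :
    ‖∫ x in a..b, ∫ y in c..d, f x y‖ ≤ ∫ x in a..b, ∫ y in c..d, g x y :=
  norm_integral_le_of_norm_le hab (.of_forall fun x hx =>
    norm_integral_le_of_norm_le hcd (.of_forall (hfg x hx)) (hg x hx)) hg'

theorem abs_add_mul_le {m q G lam B : ℝ} (hq : 0 ≤ q) (hm : |m| ≤ lam) (hG : |G| ≤ B) :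
    |(m + q) * G| ≤ (lam + q) * B := by
  have hmq : |m + q| ≤ lam + q := (abs_add_le m q).trans (by rw [abs_of_nonneg hq]; linarith)
  rw [abs_mul]
  exact mul_le_mul hmq hG (abs_nonneg G) ((abs_nonneg _).trans hmq)

noncomputable def H₁ (lam : ℝ) (F : ℝ → ℝ → ℝ) (α β : ℝ) : ℝ :=
  ∫ η in β..α, ∫ σ in (0 : ℝ)..β, lam * F η σ

noncomputable def H₂ (F : ℝ → ℝ → ℝ) (α β : ℝ) : ℝ :=
  ∫ η in β..α, ∫ σ in (0 : ℝ)..β, η * σ / (η ^ 2 - σ ^ 2) ^ 2 * F η σ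

theorem Fnk_zero_zero (lam η σ : ℝ) : Fnk lam 0 0 η σ = lam * (η - σ) := by
  simp [Fnk]

theorem intervalIntegrable_mul_Fnk_zero_zero (lam η a b : ℝ) :
    IntervalIntegrable (fun σ => lam * Fnk lam 0 0 η σ) volume a b :=
  (by simp only [Fnk_zero_zero]; fun_prop : Continuous _).intervalIntegrable _ _

theorem integral_mul_Fnk_zero_zero (lam η β : ℝ) :
    ∫ σ in (0 : ℝ)..β, lam * Fnk lam 0 0 η σ = lam ^ 2 * (η * β - β ^ 2 / 2) := by
  simp only [Fnk_zero_zero, ← mul_assoc, ← pow_two]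
  rw [integral_const_mul,
    integral_sub intervalIntegrable_const intervalIntegral.intervalIntegrable_id]
  simp only [integral_const, integral_id, smul_eq_mul, sub_zero]
  ring

theorem intervalIntegrable_integral_mul_Fnk_zero_zero (lam β a b : ℝ) :
    IntervalIntegrable (fun η => ∫ σ in (0 : ℝ)..β, lam * Fnk lam 0 0 η σ) volume a b := by
  simp only [integral_mul_Fnk_zero_zero]
  exact (by fun_prop : Continuous _).intervalIntegrable _ _

theorem H₁_Fnk_zero_zero (lam α β : ℝ) : H₁ lam (Fnk lam 0 0) α β = Fnk lam 1 0 α β := by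
  simp only [H₁, integral_mul_Fnk_zero_zero]
  rw [integral_const_mul, integral_sub ((by fun_prop : Continuous _).intervalIntegrable _ _)
    intervalIntegrable_const]
  simp only [integral_const, integral_mul_const, integral_id, smul_eq_mul, Fnk, Nat.factorial,
    Nat.cast_one, pow_zero, mul_one]
  ring

theorem intervalIntegrable_kernel_mul_Fnk_zero_zero (lam : ℝ) {η β : ℝ} (hβ : 0 ≤ β)
    (hη : β < η) :
    IntervalIntegrable (fun σ => η * σ / (η ^ 2 - σ ^ 2) ^ 2 * Fnk lam 0 0 η σ) volume 0 β := by
  refine ContinuousOn.intervalIntegrable fun σ hσ => ContinuousAt.continuousWithinAt ?_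
  rw [uIcc_of_le hβ] at hσ
  have : (η ^ 2 - σ ^ 2) ^ 2 ≠ 0 := by
    have : 0 < η ^ 2 - σ ^ 2 := by nlinarith [hσ.1, hσ.2]
    positivity
  simp only [Fnk_zero_zero]
  fun_prop (disch := assumption)

theorem hasDerivAt_kernel_antideriv (lam : ℝ) {η σ : ℝ} (hp : η + σ ≠ 0) (hm : η - σ ≠ 0) :
    HasDerivAt (fun s => lam * ((log (η + s) - log (η - s)) / 4 + η / (2 * (η + s))))
      (η * σ / (η ^ 2 - σ ^ 2) ^ 2 * Fnk lam 0 0 η σ) σ := by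
  have hplus : HasDerivAt (fun s => η + s) 1 σ := (hasDerivAt_id σ).const_add η
  have hminus : HasDerivAt (fun s => η - s) (-1) σ := (hasDerivAt_id σ).const_sub η
  refine ((((hplus.log hp).sub (hminus.log hm)).div_const 4).add
    ((hasDerivAt_const σ η).div (hplus.const_mul 2) (mul_ne_zero two_ne_zero hp))).const_mul lam
    |>.congr_deriv ?_
  rw [Fnk_zero_zero, show η ^ 2 - σ ^ 2 = (η + σ) * (η - σ) by ring]
  field_simp
  ring

theorem integral_kernel_mul_Fnk_zero_zero (lam : ℝ) {η β : ℝ} (hβ : 0 ≤ β) (hη : β < η) :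
    ∫ σ in (0 : ℝ)..β, η * σ / (η ^ 2 - σ ^ 2) ^ 2 * Fnk lam 0 0 η σ =
      lam / 4 * (log (η + β) - log (η - β) - 2 * β / (η + β)) := by
  rw [integral_eq_sub_of_hasDerivAt (fun σ hσ => hasDerivAt_kernel_antideriv lam ?_ ?_)
    (intervalIntegrable_kernel_mul_Fnk_zero_zero lam hβ hη)]
  · have : η ≠ 0 := by linarith
    have : η + β ≠ 0 := by linarith
    simp only [add_zero, sub_zero, sub_self]
    field_simp
    ring
  all_goals rw [uIcc_of_le hβ] at hσ; linarith [hσ.1, hσ.2]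

theorem intervalIntegrable_integral_kernel_closedForm (lam : ℝ) {α β : ℝ} (hβ : 0 < β)
    (hβα : β ≤ α) :
    IntervalIntegrable (fun η => lam / 4 * (log (η + β) - log (η - β) - 2 * β / (η + β)))
      volume β α := by
  have hpos : ∀ η ∈ uIcc β α, η + β ≠ 0 := fun η hη => by
    rw [uIcc_of_le hβα] at hη; linarith [hη.1]
  have hlog : IntervalIntegrable (fun η => log (η - β)) volume β α := by
    simpa using (intervalIntegrable_log' (a := β - β) (b := α - β)).comp_sub_right β
  refine ((ContinuousOn.intervalIntegrable ?_).sub hlog |>.sub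
    (ContinuousOn.intervalIntegrable ?_)).const_mul _
  · exact ContinuousOn.log (by fun_prop) hpos
  · exact continuousOn_const.div (by fun_prop) hpos

theorem intervalIntegrable_integral_kernel_mul_Fnk_zero_zero (lam : ℝ) {α β : ℝ} (hβ : 0 < β)
    (hβα : β ≤ α) :
    IntervalIntegrable (fun η => ∫ σ in (0 : ℝ)..β, η * σ / (η ^ 2 - σ ^ 2) ^ 2 * Fnk lam 0 0 η σ)
      volume β α :=
  (intervalIntegrable_integral_kernel_closedForm lam hβ hβα).congr fun η hη => by
    rw [uIoc_of_le hβα] at hη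
    exact (integral_kernel_mul_Fnk_zero_zero lam hβ.le hη.1).symm

theorem H₂_Fnk_zero_zero (lam : ℝ) {α β : ℝ} (hβ : 0 < β) (hβα : β < α) :
    H₂ (Fnk lam 0 0) α β = Fnk lam 0 1 α β / 4 := by
  have hderiv : ∀ η ∈ Ioo β α,
      HasDerivAt (fun η => lam / 4 * ((η - β) * (log (η + β) - log (η - β))))
        (lam / 4 * (log (η + β) - log (η - β) - 2 * β / (η + β))) η := fun η hη => by
    have hp : η + β ≠ 0 := by linarith [hη.1]
    have hm : η - β ≠ 0 := by linarith [hη.1]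
    refine (((hasDerivAt_id' η).sub_const β).mul
      ((((hasDerivAt_id' η).add_const β).log hp).sub (((hasDerivAt_id' η).sub_const β).log hm)))
      |>.const_mul _ |>.congr_deriv ?_
    simp only [Pi.sub_apply]
    field_simp
    ring
  have hcont : ContinuousOn (fun η => lam / 4 * ((η - β) * (log (η + β) - log (η - β))))
      (Icc β α) := by
    refine continuousOn_const.mul (ContinuousOn.congr (f := fun η =>
      (η - β) * log (η + β) - (η - β) * log (η - β)) (.sub ?_ ?_) fun η _ => mul_sub _ _ _)
    · exact (by fun_prop : ContinuousOn (fun η => η - β) _).mul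
        (ContinuousOn.log (by fun_prop) fun η hη => by linarith [hη.1])
    · exact (continuous_mul_log.comp (continuous_sub_right β)).continuousOn
  rw [H₂, integral_congr_Ioo_of_le hβα.le
      (fun η hη => integral_kernel_mul_Fnk_zero_zero lam hβ.le hη.1),
    integral_eq_sub_of_hasDerivAt_of_le hβα.le hcont hderiv
      (intervalIntegrable_integral_kernel_closedForm lam hβ hβα.le),
    Fnk, log_div (by linarith) (by linarith)]
  simp only [sub_self, log_zero, zero_mul, mul_zero, sub_zero, pow_one, Nat.factorial, Nat.cast_one,
    mul_one, div_one]
  ring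

theorem intervalIntegrable_majorant (lam : ℝ) {η β : ℝ} (hβ : 0 ≤ β) (hη : β < η) :
    IntervalIntegrable (fun σ => (lam + η * σ / (η ^ 2 - σ ^ 2) ^ 2) * Fnk lam 0 0 η σ)
      volume 0 β := by
  simp only [add_mul]
  exact (intervalIntegrable_mul_Fnk_zero_zero lam η 0 β).add
    (intervalIntegrable_kernel_mul_Fnk_zero_zero lam hβ hη)

theorem integral_majorant_eq_add (lam : ℝ) {η β : ℝ} (hβ : 0 ≤ β) (hη : β < η) :
    ∫ σ in (0 : ℝ)..β, (lam + η * σ / (η ^ 2 - σ ^ 2) ^ 2) * Fnk lam 0 0 η σ =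
      (∫ σ in (0 : ℝ)..β, lam * Fnk lam 0 0 η σ) +
        ∫ σ in (0 : ℝ)..β, η * σ / (η ^ 2 - σ ^ 2) ^ 2 * Fnk lam 0 0 η σ := by
  simp only [add_mul]
  exact integral_add (intervalIntegrable_mul_Fnk_zero_zero lam η 0 β)
    (intervalIntegrable_kernel_mul_Fnk_zero_zero lam hβ hη)

theorem intervalIntegrable_integral_majorant (lam : ℝ) {α β : ℝ} (hβ : 0 < β) (hβα : β ≤ α) :
    IntervalIntegrable
      (fun η => ∫ σ in (0 : ℝ)..β, (lam + η * σ / (η ^ 2 - σ ^ 2) ^ 2) * Fnk lam 0 0 η σ)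
      volume β α :=
  ((intervalIntegrable_integral_mul_Fnk_zero_zero lam β β α).add
    (intervalIntegrable_integral_kernel_mul_Fnk_zero_zero lam hβ hβα)).congr fun η hη => by
    rw [uIoc_of_le hβα] at hη
    exact (integral_majorant_eq_add lam hβ.le hη.1).symm

theorem integral_integral_majorant (lam : ℝ) {α β : ℝ} (hβ : 0 < β) (hβα : β < α) :
    ∫ η in β..α, ∫ σ in (0 : ℝ)..β, (lam + η * σ / (η ^ 2 - σ ^ 2) ^ 2) * Fnk lam 0 0 η σ =
      Fnk lam 1 0 α β + Fnk lam 0 1 α β / 4 := by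
  rw [integral_congr_Ioo_of_le hβα.le (fun η hη => integral_majorant_eq_add lam hβ.le hη.1),
    integral_add (intervalIntegrable_integral_mul_Fnk_zero_zero lam β β α)
      (intervalIntegrable_integral_kernel_mul_Fnk_zero_zero lam hβ hβα.le),
    ← H₁_Fnk_zero_zero, ← H₂_Fnk_zero_zero lam hβ hβα, H₁, H₂]

theorem first_successive_approximation_bound_general (R lam : ℝ)
    (μ G0 G1 : ℝ → ℝ → ℝ)
    (hμ : ∀ η σ, 0 ≤ σ → σ ≤ η → η ≤ 2 * R → σ ≤ 2 * R - η → |μ η σ| ≤ lam)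
    (hG0 : ∀ η σ, 0 ≤ σ → σ ≤ η → η ≤ 2 * R → σ ≤ 2 * R - η → |G0 η σ| ≤ lam * (η - σ))
    (hG1 : ∀ α β, G1 α β =
      ∫ η in β..α, ∫ σ in (0 : ℝ)..β,
        (μ η σ + η * σ / ((η ^ 2 - σ ^ 2) ^ 2)) * G0 η σ) :
    ∀ α β, 0 ≤ β → β ≤ α → α ≤ 2 * R → β ≤ 2 * R - α →
      |G1 α β| ≤ Fnk lam 1 0 α β + Fnk lam 0 1 α β / 4 := by
  intro α β hβ hβα hα hβR
  rcases hβ.eq_or_lt with rfl | hβ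
  · simp [hG1, Fnk]
  rcases hβα.eq_or_lt with rfl | hβα
  · simp [hG1, Fnk]
  rw [hG1, ← Real.norm_eq_abs, ← integral_integral_majorant lam hβ hβα]
  refine norm_integral_integral_le hβα.le hβ.le (fun η hη σ hσ => ?_)
    (fun η hη => intervalIntegrable_majorant lam hβ.le hη.1)
    (intervalIntegrable_integral_majorant lam hβ hβα.le)
  obtain ⟨hβη, hηα⟩ := hη
  obtain ⟨hσ0, hσβ⟩ := hσ
  have hq : 0 ≤ η * σ / (η ^ 2 - σ ^ 2) ^ 2 :=
    div_nonneg (mul_nonneg (by linarith) hσ0.le) (sq_nonneg _)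
  rw [Real.norm_eq_abs, Fnk_zero_zero]
  exact abs_add_mul_le hq (hμ η σ hσ0.le (by linarith) (by linarith) (by linarith))
    (hG0 η σ hσ0.le (by linarith) (by linarith) (by linarith))

/-- First successive approximation bound: if |G₀(α,β)| ≤ λ̄(α-β) on T' and
G₁(α,β) = ∫_β^α ∫_0^β [μ(η,σ) + ησ/(η²-σ²)²] G₀(η,σ) dσ dη with |μ| ≤ λ̄,
then |G₁(α,β)| ≤ F_{1,0}(α,β) + F_{0,1}(α,β)/4 on T'. -/
theorem first_successive_approximation_bound (R lam : ℝ) (hR : 0 < R) (hlam : 0 < lam)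
    (μ G0 G1 : ℝ → ℝ → ℝ)
    (hμm : Measurable (fun p : ℝ × ℝ => μ p.1 p.2))
    (hG0m : Measurable (fun p : ℝ × ℝ => G0 p.1 p.2))
    (hμ : ∀ η σ, 0 ≤ σ → σ ≤ η → η ≤ 2 * R → σ ≤ 2 * R - η → |μ η σ| ≤ lam)
    (hG0 : ∀ η σ, 0 ≤ σ → σ ≤ η → η ≤ 2 * R → σ ≤ 2 * R - η → |G0 η σ| ≤ lam * (η - σ))
    (hG1 : ∀ α β, G1 α β =
      ∫ η in β..α, ∫ σ in (0 : ℝ)..β,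
        (μ η σ + η * σ / ((η ^ 2 - σ ^ 2) ^ 2)) * G0 η σ) :
    ∀ α β, 0 ≤ β → β ≤ α → α ≤ 2 * R → β ≤ 2 * R - α →
      |G1 α β| ≤ Fnk lam 1 0 α β + Fnk lam 0 1 α β / 4 :=
  first_successive_approximation_bound_general R lam μ G0 G1 hμ hG0 hG1
end

section
/- For 0 < β < α, ∫_β^α ∫_0^β ησ(η-σ)/(η²-σ²)² dσ dη = (1/4)(α-β)log((α+β)/(α-β)). -/
open intervalIntegral Real Set MeasureTheory

/-- For 0 < β < α:
∫_β^α ∫_0^β ησ(η-σ)/(η²-σ²)² dσ dη = (1/4)(α-β)log((α+β)/(α-β)). -/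
theorem singular_double_integral_eval (α β : ℝ) (hβ : 0 < β) (hβα : β < α) :
    (∫ η in β..α, ∫ σ in (0 : ℝ)..β, η * σ * (η - σ) / ((η ^ 2 - σ ^ 2) ^ 2)) =
      (α - β) * Real.log ((α + β) / (α - β)) / 4 := by
  have hβα' : β ≤ α := hβα.le
  set F : ℝ → ℝ := fun η => (Real.log (η + β) - Real.log (η - β)) / 4 - β / (2 * (η + β))
    with hF
  -- Step 1: inner integral
  have hinner : ∀ η ∈ Ioc β α,
      (∫ σ in (0:ℝ)..β, η * σ * (η - σ) / ((η ^ 2 - σ ^ 2) ^ 2)) = F η := by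
    intro η hη
    have hηβ : β < η := hη.1
    have hη0 : 0 < η := hβ.trans hηβ
    set g : ℝ → ℝ := fun σ => (Real.log (η + σ) - Real.log (η - σ)) / 4 + η / (2 * (η + σ))
      with hg
    have hderiv : ∀ σ ∈ uIcc (0:ℝ) β,
        HasDerivAt g (η * σ * (η - σ) / ((η ^ 2 - σ ^ 2) ^ 2)) σ := by
      intro σ hσ
      rw [uIcc_of_le hβ.le] at hσ
      have h1 : 0 < η + σ := by linarith [hσ.1]
      have h2 : 0 < η - σ := by linarith [hσ.2]
      have d1 : HasDerivAt (fun σ : ℝ => η + σ) 1 σ := (hasDerivAt_id σ).const_add η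
      have d2 : HasDerivAt (fun σ : ℝ => η - σ) (-1) σ := by
        simpa using (hasDerivAt_id σ).const_sub η
      have dl1 : HasDerivAt (fun σ : ℝ => Real.log (η + σ)) (1 / (η + σ)) σ := by
        simpa using d1.log h1.ne'
      have dl2 : HasDerivAt (fun σ : ℝ => Real.log (η - σ)) (-1 / (η - σ)) σ := by
        simpa using d2.log h2.ne'
      have d3 : HasDerivAt (fun σ : ℝ => 2 * (η + σ)) 2 σ := by
        simpa using d1.const_mul 2
      have d4 : HasDerivAt (fun σ : ℝ => η / (2 * (η + σ)))
          (-(η * 2) / (2 * (η + σ)) ^ 2) σ := by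
        have h := (hasDerivAt_const σ η).div d3 (by positivity)
        exact h.congr_deriv (by ring)
      have := ((dl1.sub dl2).div_const 4).add d4
      refine this.congr_deriv ?_
      have h3 : η ^ 2 - σ ^ 2 ≠ 0 := by nlinarith
      field_simp
      ring
    have hint : IntervalIntegrable (fun σ => η * σ * (η - σ) / ((η ^ 2 - σ ^ 2) ^ 2))
        volume 0 β := by
      apply ContinuousOn.intervalIntegrable
      apply ContinuousOn.div (by fun_prop) (by fun_prop)
      intro σ hσ
      rw [uIcc_of_le hβ.le] at hσ
      have h2 : 0 < η - σ := by linarith [hσ.2]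
      have h1 : 0 < η + σ := by linarith [hσ.1]
      have h3 : 0 < η ^ 2 - σ ^ 2 := by nlinarith
      positivity
    rw [integral_eq_sub_of_hasDerivAt hderiv hint]
    have h1 : 0 < η + β := by linarith
    simp only [hg, hF, add_zero, sub_zero, sub_self, zero_div]
    field_simp
    ring
  -- rewrite the outer integral
  rw [intervalIntegral.integral_congr_ae (g := F) (ae_of_all _ fun η hη =>
    hinner η (by rwa [uIoc_of_le hβα'] at hη))]
  -- Step 2: outer integral
  set G : ℝ → ℝ := fun η => ((η - β) * Real.log (η + β) - (η - β) * Real.log (η - β)) / 4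
    with hG
  have hcont : ContinuousOn G (Icc β α) := by
    apply ContinuousOn.div_const
    apply ContinuousOn.sub
    · apply ContinuousOn.mul (by fun_prop)
      apply ContinuousOn.log (by fun_prop)
      intro η hη; have := hη.1; nlinarith [hη.1]
    · have : Continuous fun η : ℝ => (η - β) * Real.log (η - β) :=
        Real.continuous_mul_log.comp (continuous_id.sub continuous_const)
      exact this.continuousOn
  have hGd : ∀ η ∈ Ioo β α, HasDerivAt G (F η) η := by
    intro η hη
    have h1 : 0 < η + β := by linarith [hη.1]
    have h2 : 0 < η - β := by linarith [hη.1]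
    have d0 : HasDerivAt (fun η : ℝ => η - β) 1 η := (hasDerivAt_id η).sub_const β
    have d0' : HasDerivAt (fun η : ℝ => η + β) 1 η := (hasDerivAt_id η).add_const β
    have dl1 : HasDerivAt (fun η : ℝ => Real.log (η + β)) (1 / (η + β)) η := by
      simpa using d0'.log h1.ne'
    have dl2 : HasDerivAt (fun η : ℝ => Real.log (η - β)) (1 / (η - β)) η := by
      simpa using d0.log h2.ne'
    have := ((d0.mul dl1).sub (d0.mul dl2)).div_const 4
    refine this.congr_deriv ?_
    simp only [hF]
    field_simp
    ring
  have hFint : IntervalIntegrable F volume β α := by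
    have key : IntervalIntegrable (fun η => F η + 1/4) volume β α := by
      apply intervalIntegrable_deriv_of_nonneg (g := fun η => G η + η / 4)
      · rw [uIcc_of_le hβα']
        exact hcont.add (by fun_prop)
      · intro η hη
        rw [min_eq_left hβα', max_eq_right hβα'] at hη
        exact (hGd η hη).add ((hasDerivAt_id η).div_const 4)
      · intro η hη
        rw [min_eq_left hβα', max_eq_right hβα'] at hη
        have h1 : 0 < η + β := by linarith [hη.1]
        have h2 : 0 < η - β := by linarith [hη.1]
        have hlog : Real.log (η - β) ≤ Real.log (η + β) :=
          Real.log_le_log h2 (by linarith)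
        have hb : β / (2 * (η + β)) ≤ 1/4 := by
          rw [div_le_iff₀ (by positivity)]
          linarith [hη.1]
        simp only [hF]
        linarith
    have := key.sub (_root_.intervalIntegrable_const (c := (1:ℝ)/4))
    simpa using this
  rw [integral_eq_sub_of_hasDeriv_right_of_le hβα' hcont
    (fun η hη => (hGd η hη).hasDerivWithinAt) hFint]
  have h1 : 0 < α + β := by linarith
  have h2 : 0 < α - β := by linarith
  simp only [hG, sub_self, zero_mul, sub_zero, zero_div, sub_zero]
  rw [Real.log_div h1.ne' h2.ne']
  ring
end
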